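/- arXiv:1008.4721 — 4 statements merged into one kernel-verified Lean document; each statement's English description precedes it below -/
import Mathlib

section
/- Assume all rates are nonnegative. The system of inequalities max{0, α₂-α₂'} ≤ x ≤ min{α₂, α₁'-α₁}, 0 ≤ y ≤ min{α₂, α₃'-α₁}, max{0, β₂'-β₂} ≤ s ≤ min{β₂', β₁-β₁'}, 0 ≤ t ≤ min{β₂', β₃-β₁'} has a solution (x,y,s,t) ∈ ℝ⁴ if and only if α₁' ≥ α₁, α₁'+α₂' ≥ α₁+α₂, α₃' ≥ α₁, β₁' ≤ β₁, β₁'+β₂' ≤ β₁+β₂ and β₁' ≤ β₃. -/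
/-- The free parameters `x, y, s, t` of the coupling of Table 5 exist, with all
coupled rates nonnegative, if and only if
`α₁' ≥ α₁`, `α₁'+α₂' ≥ α₁+α₂`, `α₃' ≥ α₁`, `β₁' ≤ β₁`,
`β₁'+β₂' ≤ β₁+β₂`, and `β₁' ≤ β₃`. -/
theorem coupling_parameters_exist
    (α₁ α₂ α₃ β₁ β₂ β₃ α₁' α₂' α₃' β₁' β₂' β₃' : ℝ)
    (ha₁ : 0 ≤ α₁) (ha₂ : 0 ≤ α₂) (ha₃ : 0 ≤ α₃)
    (hb₁ : 0 ≤ β₁) (hb₂ : 0 ≤ β₂) (hb₃ : 0 ≤ β₃)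
    (ha₁' : 0 ≤ α₁') (ha₂' : 0 ≤ α₂') (ha₃' : 0 ≤ α₃')
    (hb₁' : 0 ≤ β₁') (hb₂' : 0 ≤ β₂') (hb₃' : 0 ≤ β₃') :
    (∃ x y s t : ℝ,
      max 0 (α₂ - α₂') ≤ x ∧ x ≤ min α₂ (α₁' - α₁) ∧
      0 ≤ y ∧ y ≤ min α₂ (α₃' - α₁) ∧
      max 0 (β₂' - β₂) ≤ s ∧ s ≤ min β₂' (β₁ - β₁') ∧
      0 ≤ t ∧ t ≤ min β₂' (β₃ - β₁')) ↔
    (α₁ ≤ α₁' ∧ α₁ + α₂ ≤ α₁' + α₂' ∧ α₁ ≤ α₃' ∧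
      β₁' ≤ β₁ ∧ β₁' + β₂' ≤ β₁ + β₂ ∧ β₁' ≤ β₃) := by
  constructor
  · rintro ⟨x, y, s, t, hx1, hx2, hy1, hy2, hs1, hs2, ht1, ht2⟩
    simp only [max_le_iff, le_min_iff] at *
    refine ⟨by linarith [hx1.1, hx2.2], by linarith [hx1.2, hx2.2], by linarith [hy2.2],
      by linarith [hs1.1, hs2.2], by linarith [hs1.2, hs2.2], by linarith [ht2.2]⟩
  · rintro ⟨h1, h2, h3, h4, h5, h6⟩
    refine ⟨max 0 (α₂ - α₂'), 0, max 0 (β₂' - β₂), 0, le_refl _, ?_, le_refl _,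
      ?_, le_refl _, ?_, le_refl _, ?_⟩ <;>
      simp only [max_le_iff, le_min_iff, sub_nonneg] <;>
      constructorm* _ ∧ _ <;> linarith
end

section
/- Suppose X₀, X₁, X₂ satisfy X₁X₀ = X₁+X₀, X₁X₂ = X₂, X₂X₀ = (1/w)X₂, and boundary conditions X₁|V⟩ = (1/β)|V⟩, ⟨W|X₀ = (1/w)⟨W|, ⟨W|X₂ = z⟨W|. Define X₁' = X₁ and X₀' = X₀ + X₂. Then X₁'X₀' = X₁' + X₀', X₁'|V⟩ = (1/β)|V⟩, and ⟨W|X₀' = ((1+wz)/w)⟨W|. That is, the primed matrices satisfy the algebra of a one-species open TASEP with entry rate α = w/(1+wz) and exit rate β. -/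
theorem reduced_one_species_algebra_general {V : Type*} [AddCommGroup V] [Module ℝ V]
    (X₀ X₁ X₂ : V →ₗ[ℝ] V) (W : V →ₗ[ℝ] ℝ) (Vv : V) (w β z : ℝ)
    (hw : w ≠ 0)
    (h10 : X₁ ∘ₗ X₀ = X₁ + X₀)
    (h12 : X₁ ∘ₗ X₂ = X₂)
    (hV : X₁ Vv = (1 / β) • Vv)
    (hW0 : W ∘ₗ X₀ = (1 / w) • W)
    (hW2 : W ∘ₗ X₂ = z • W) :
    X₁ ∘ₗ (X₀ + X₂) = X₁ + (X₀ + X₂) ∧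
    X₁ Vv = (1 / β) • Vv ∧
    W ∘ₗ (X₀ + X₂) = ((1 + w * z) / w) • W := by
  refine ⟨?_, hV, ?_⟩
  · rw [LinearMap.comp_add, h10, h12, add_assoc]
  · rw [LinearMap.comp_add, hW0, hW2, ← add_smul]
    congr 1
    field_simp

/-- Reduction of the `v = 1` two-species algebra to a one-species TASEP
algebra: if `X₁X₀ = X₁+X₀`, `X₁X₂ = X₂`, `X₂X₀ = (1/w)X₂`,
`X₁|V⟩ = (1/β)|V⟩`, `⟨W|X₀ = (1/w)⟨W|`, `⟨W|X₂ = z⟨W|`, then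
`X₁' := X₁` and `X₀' := X₀ + X₂` satisfy `X₁'X₀' = X₁' + X₀'`,
`X₁'|V⟩ = (1/β)|V⟩`, and `⟨W|X₀' = ((1+wz)/w)⟨W|`, i.e. the algebra of an
open one-species TASEP with entry rate `w/(1+wz)` and exit rate `β`. -/
theorem reduced_one_species_algebra {V : Type*} [AddCommGroup V] [Module ℝ V]
    (X₀ X₁ X₂ : V →ₗ[ℝ] V) (W : V →ₗ[ℝ] ℝ) (Vv : V) (w β z : ℝ)
    (hw : w ≠ 0) (hβ : β ≠ 0)
    (h10 : X₁ ∘ₗ X₀ = X₁ + X₀)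
    (h12 : X₁ ∘ₗ X₂ = X₂)
    (h20 : X₂ ∘ₗ X₀ = (1 / w) • X₂)
    (hV : X₁ Vv = (1 / β) • Vv)
    (hW0 : W ∘ₗ X₀ = (1 / w) • W)
    (hW2 : W ∘ₗ X₂ = z • W) :
    X₁ ∘ₗ (X₀ + X₂) = X₁ + (X₀ + X₂) ∧
    X₁ Vv = (1 / β) • Vv ∧
    W ∘ₗ (X₀ + X₂) = ((1 + w * z) / w) • W :=
  reduced_one_species_algebra_general X₀ X₁ X₂ W Vv w β z hw h10 h12 hV hW0 hW2
end

section
/- If X₂ = λ|V₁⟩⟨W_w| is a rank one operator and the stationary weight of a configuration τ with a type-2 particle at site i is w_L(τ) = ⟨W|X_{τ₁}⋯X_{τ_L}|V⟩, then w_L factorizes: w_L(τ) = λ·(⟨W|X_{τ₁}⋯X_{τ_{i-1}}|V₁⟩)·(⟨W_w|X_{τ_{i+1}}⋯X_{τ_L}|V⟩). Consequently, conditioned on a type-2 particle at site i, the configurations strictly to the left and strictly to the right of site i are independent under the stationary measure (within a sector of fixed total type-2 particle count). -/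
/-- The stationary weight of a configuration `τ` of the two-species TASEP,
`w_L(τ) = ⟨W| X_{τ₁} ⋯ X_{τ_L} |V⟩`. -/
noncomputable def weight {V : Type*} [AddCommGroup V] [Module ℝ V]
    (X : Fin 3 → Module.End ℝ V) (W : V →ₗ[ℝ] ℝ) (Vv : V)
    (l : List (Fin 3)) : ℝ :=
  W ((l.map X).prod Vv)

/-- If `X₂ = λ|V₁⟩⟨W_w|` is rank one, then the weight of a configuration with
a type-2 particle at some site factorizes into the weights of the
configurations to the left and to the right of that site; consequently,
conditioned on a type-2 particle at a given site, the configurations strictly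
to its left and strictly to its right are independent under the stationary
measure. -/
theorem weight_factorizes {V : Type*} [AddCommGroup V] [Module ℝ V]
    (X : Fin 3 → Module.End ℝ V) (W Ww : V →ₗ[ℝ] ℝ) (Vv V₁ : V) (lam : ℝ)
    (hX₂ : X 2 = (lam • (Ww.smulRight V₁) : V →ₗ[ℝ] V))
    (l₁ l₂ : List (Fin 3)) :
    weight X W Vv (l₁ ++ [2] ++ l₂)
      = lam * weight X W V₁ l₁ * weight X Ww Vv l₂ := by
  unfold weight
  simp [List.prod_append, hX₂, Module.End.mul_apply, mul_comm, mul_left_comm]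
end

section
/- Set r = (r₀, r₁, r₂) with r₁ = α, r₂ = (1-2α)(w-α)/(w(1-α)), r₀ = α(1-2α+αw)/(w(1-α)) and r' = (r₀', r₁', r₂') with r₁' = 1-α, r₂' = 0, r₀' = α, for 0 < α < 1/2 < 1 and w > α. Then r₀+r₁+r₂ = 1 and r₀'+r₁'+r₂' = 1, and the mean-field currents with v = 1 match on both sides of the shock for species 1: r₁(r₀ + r₂) = r₁'(r₀' + r₂') (both equal α(1-α)). Moreover r₀ = r₀' if and only if w = 1. -/
section ShockDensities

variable {α w : ℝ}

theorem hole_add_second_species_eq (hw : w ≠ 0) (hα : 1 - α ≠ 0) :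
    α * (1 - 2*α + α*w) / (w * (1 - α)) + (1 - 2*α) * (w - α) / (w * (1 - α)) = 1 - α := by
  field_simp
  ring

theorem hole_density_sub_eq (hw : w ≠ 0) (hα : 1 - α ≠ 0) :
    α * (1 - 2*α + α*w) / (w * (1 - α)) - α = α * (1 - 2*α) * (1 - w) / (w * (1 - α)) := by
  field_simp
  ring

theorem hole_density_eq_iff (hw : w ≠ 0) (hα0 : α ≠ 0) (hα : 1 - 2*α ≠ 0) (hα' : 1 - α ≠ 0) :
    α * (1 - 2*α + α*w) / (w * (1 - α)) = α ↔ w = 1 := by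
  rw [← sub_eq_zero, hole_density_sub_eq hw hα', div_eq_zero_iff]
  simp only [mul_eq_zero, hα0, hα, hw, hα', sub_eq_zero, or_self, false_or, or_false]
  exact eq_comm

end ShockDensities

/-- The densities on the two sides of the shock in the
permeable/semipermeable two-species TASEP with `v = 1`, `α = β < 1/2`:
both triples sum to `1`, the mean-field species-1 currents match across the
shock (both equal to `α(1-α)`), and the hole densities match iff `w = 1`. -/
theorem shock_densities (α w : ℝ) (hα0 : 0 < α) (hα : α < 1/2) (hw : α < w) :
    let r₁ : ℝ := α
    let r₂ : ℝ := (1 - 2*α) * (w - α) / (w * (1 - α))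
    let r₀ : ℝ := α * (1 - 2*α + α*w) / (w * (1 - α))
    let r₁' : ℝ := 1 - α
    let r₂' : ℝ := (0 : ℝ)
    let r₀' : ℝ := α
    r₀ + r₁ + r₂ = 1 ∧ r₀' + r₁' + r₂' = 1 ∧
    r₁ * (r₀ + r₂) = r₁' * (r₀' + r₂') ∧
    r₁ * (r₀ + r₂) = α * (1 - α) ∧
    (r₀ = r₀' ↔ w = 1) := by
  intro r₁ r₂ r₀ r₁' r₂' r₀'
  have hw0 : w ≠ 0 := by linarith
  have h1α : 1 - α ≠ 0 := by linarith
  have hsum : r₀ + r₂ = 1 - α := hole_add_second_species_eq hw0 h1α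
  refine ⟨by linarith, by ring, ?_, ?_, ?_⟩
  · rw [hsum]; ring
  · rw [hsum]
  · exact hole_density_eq_iff hw0 hα0.ne' (by linarith) h1α
end
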